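/- Let D ≥ 1, N ≥ 1, let γ₁,…,γ_D be N×N complex matrices with γᵢγⱼ + γⱼγᵢ = −2δᵢⱼ·I, let ħ, κ, g > 0, and fix B, C ∈ ℝ^D; set 𝒜ᵢ := Σⱼ (BⱼCᵢ − CⱼBᵢ)γⱼ. Suppose U : ℝ^D → Mat_{N×N}(ℂ) is differentiable and satisfies the first-order system ∂U/∂Aᵢ = (i g/(2ħκ))·𝒜ᵢ·U for all i = 1,…,D and all A ∈ ℝ^D. Then U is twice differentiable and −(ħ²κ/2)·Σᵢ ∂²U/∂Aᵢ² + (g²/(4κ))·(‖B‖²‖C‖² − ⟨B,C⟩²)·U = 0. -/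

import Mathlib

/-! Differentiating `∂ᵢU = c 𝒜ᵢ U` once more gives `∂ᵢ²U = c² 𝒜ᵢ² U` with `c = ig/(2ħκ)`.
The Clifford relations make each `𝒜ᵢ² = (Σⱼ aⱼᵢ γⱼ)²` the scalar `-Σⱼ aⱼᵢ²`, and by Lagrange's
identity `Σᵢⱼ (BⱼCᵢ - CⱼBᵢ)² = 2(‖B‖²‖C‖² - ⟨B,C⟩²)`; since `c² = -g²/(4ħ²κ²)`, the Laplacian
term `-(ħ²κ/2) Σᵢ ∂ᵢ²U` is exactly `-(g²/4κ) D²(B,C) U`. -/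

open scoped BigOperators

attribute [local instance] Matrix.normedAddCommGroup Matrix.normedSpace

/-- Partial derivative in the direction of the i-th coordinate of A-space. -/
noncomputable def pd {D N : ℕ} (i : Fin D)
    (Φ : (Fin D → ℝ) → Matrix (Fin N) (Fin N) ℂ) :
    (Fin D → ℝ) → Matrix (Fin N) (Fin N) ℂ :=
  fun A => fderiv ℝ Φ A (Pi.single i 1)

open Finset

theorem Finset.sum_sum_mul_sub_mul_sq {R ι : Type*} [CommRing R] (s : Finset ι) (f g : ι → R) :
    ∑ i ∈ s, ∑ j ∈ s, (f j * g i - g j * f i) ^ 2 =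
      2 * ((∑ i ∈ s, f i ^ 2) * (∑ i ∈ s, g i ^ 2) - (∑ i ∈ s, f i * g i) ^ 2) := by
  calc ∑ i ∈ s, ∑ j ∈ s, (f j * g i - g j * f i) ^ 2
      = ∑ i ∈ s, ∑ j ∈ s, (f j ^ 2 * g i ^ 2 + g j ^ 2 * f i ^ 2
          - 2 * (f j * g j) * (f i * g i)) := by
        refine sum_congr rfl fun i _ => sum_congr rfl fun j _ => ?_
        ring
    _ = _ := by
        simp only [sum_add_distrib, sum_sub_distrib, ← sum_mul, ← mul_sum]
        ring

theorem EuclideanSpace.sum_sum_mul_sub_mul_sq {ι : Type*} [Fintype ι] (x y : EuclideanSpace ℝ ι) :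
    ∑ i, ∑ j, (x j * y i - y j * x i) ^ 2 = 2 * (‖x‖ ^ 2 * ‖y‖ ^ 2 - inner ℝ x y ^ 2) := by
  rw [Finset.sum_sum_mul_sub_mul_sq, real_norm_sq_eq, real_norm_sq_eq]
  simp only [PiLp.inner_apply, RCLike.inner_apply, conj_trivial, mul_comm]

theorem sum_smul_mul_self_of_anticomm {R A ι : Type*} [Field R] [CharZero R] [Ring A]
    [Algebra R A] [Fintype ι] [DecidableEq ι] (γ : ι → A)
    (hγ : ∀ i j, γ i * γ j + γ j * γ i = if i = j then (-2 : R) • (1 : A) else 0) (a : ι → R) :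
    (∑ j, a j • γ j) * (∑ j, a j • γ j) = -(∑ j, a j ^ 2) • (1 : A) := by
  set x := ∑ j, a j • γ j
  have hexpand : x * x = ∑ j, ∑ k, (a j * a k) • (γ j * γ k) := by
    simp only [x, sum_mul_sum, smul_mul_smul_comm]
  have hswap : x * x = ∑ j, ∑ k, (a j * a k) • (γ k * γ j) := by
    rw [hexpand, sum_comm]
    exact sum_congr rfl fun j _ => sum_congr rfl fun k _ => by rw [mul_comm (a k)]
  have htwice : (2 : R) • (x * x) = (2 : R) • (-(∑ j, a j ^ 2) • (1 : A)) := by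
    calc (2 : R) • (x * x) = ∑ j, ∑ k, (a j * a k) • (γ j * γ k + γ k * γ j) := by
          rw [two_smul]
          nth_rewrite 1 [hexpand]
          rw [hswap, ← sum_add_distrib]
          simp only [← sum_add_distrib, smul_add]
      _ = ∑ j, (a j * a j) • ((-2 : R) • (1 : A)) := by
          simp only [hγ, smul_ite, smul_zero, sum_ite_eq, mem_univ, if_true]
      _ = (2 : R) • (-(∑ j, a j ^ 2) • (1 : A)) := by
          rw [smul_smul, ← sum_smul, smul_smul]
          congr 1
          simp only [sq]
          ring
  simpa using congrArg ((2 : R)⁻¹ • ·) htwice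

section PartialDerivative

variable {D N : ℕ} {U : (Fin D → ℝ) → Matrix (Fin N) (Fin N) ℂ} {i : Fin D}
  {M : Matrix (Fin N) (Fin N) ℂ}

theorem pd_mul_left {A : Fin D → ℝ} (hU : DifferentiableAt ℝ U A) :
    pd i (fun A => M * U A) A = M * pd i U A := by
  -- The entrywise norm on matrices is no ring norm, so `HasFDerivAt.const_mul` is unavailable.
  let L := LinearMap.toContinuousLinearMap (LinearMap.mulLeft ℝ M)
  have hL : HasFDerivAt (fun A => M * U A) (L.comp (fderiv ℝ U A)) A :=
    L.hasFDerivAt.comp A hU.hasFDerivAt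
  simp [pd, hL.fderiv, L]

theorem differentiable_pd_of_pd_eq_mul_left (hU : Differentiable ℝ U)
    (h : ∀ A, pd i U A = M * U A) : Differentiable ℝ (pd i U) := by
  rw [show pd i U = fun A => M * U A from funext h]
  exact (LinearMap.toContinuousLinearMap (LinearMap.mulLeft ℝ M)).differentiable.comp hU

theorem pd_pd_of_pd_eq_mul_left (hU : Differentiable ℝ U) (h : ∀ A, pd i U A = M * U A)
    (A : Fin D → ℝ) : pd i (pd i U) A = (M * M) * U A := by
  rw [show pd i U = fun A => M * U A from funext h, pd_mul_left (hU A), h, mul_assoc]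

end PartialDerivative

theorem phase_factor_second_order_equation_general
    (D N : ℕ)
    (γ : Fin D → Matrix (Fin N) (Fin N) ℂ)
    (hγ : ∀ i j, γ i * γ j + γ j * γ i =
      if i = j then (-2 : ℂ) • (1 : Matrix (Fin N) (Fin N) ℂ) else 0)
    (hb κ g : ℝ) (hhb : 0 < hb) (hκ : 0 < κ)
    (B C : EuclideanSpace ℝ (Fin D))
    (𝒜 : Fin D → Matrix (Fin N) (Fin N) ℂ)
    (h𝒜 : ∀ i, 𝒜 i = ∑ j, ((B j * C i - C j * B i : ℝ) : ℂ) • γ j)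
    (U : (Fin D → ℝ) → Matrix (Fin N) (Fin N) ℂ)
    (hU : Differentiable ℝ U)
    (hU1 : ∀ (A : Fin D → ℝ) (i : Fin D),
      fderiv ℝ U A (Pi.single i 1) =
        (Complex.I * ((g / (2 * hb * κ) : ℝ) : ℂ)) • (𝒜 i * U A)) :
    (∀ i, Differentiable ℝ (pd i U)) ∧
    ∀ A : Fin D → ℝ,
      -(((hb ^ 2 * κ / 2 : ℝ) : ℂ) • ∑ i, pd i (pd i U) A)
        + ((g ^ 2 / (4 * κ) * (‖B‖ ^ 2 * ‖C‖ ^ 2 - (inner ℝ B C : ℝ) ^ 2) : ℝ) : ℂ) • U A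
      = 0 := by
  set c : ℂ := Complex.I * ((g / (2 * hb * κ) : ℝ) : ℂ)
  have hpd : ∀ i A, pd i U A = (c • 𝒜 i) * U A := fun i A =>
    (hU1 A i).trans (smul_mul_assoc ..).symm
  refine ⟨fun i => differentiable_pd_of_pd_eq_mul_left hU (hpd i), fun A => ?_⟩
  have hsq : ∀ i, (c • 𝒜 i) * (c • 𝒜 i)
      = -(c ^ 2 * ∑ j, ((B j * C i - C j * B i : ℝ) : ℂ) ^ 2) •
          (1 : Matrix (Fin N) (Fin N) ℂ) := by
    intro i
    rw [smul_mul_smul_comm, h𝒜, sum_smul_mul_self_of_anticomm γ hγ, smul_smul, sq c,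
      neg_mul_eq_mul_neg]
  have hlaplacian : ∑ i, pd i (pd i U) A
      = -(c ^ 2 * ((2 * (‖B‖ ^ 2 * ‖C‖ ^ 2 - inner ℝ B C ^ 2) : ℝ) : ℂ)) • U A := by
    simp only [pd_pd_of_pd_eq_mul_left hU (hpd _), hsq, smul_mul_assoc, one_mul, ← sum_smul,
      ← EuclideanSpace.sum_sum_mul_sub_mul_sq B C, sum_neg_distrib]
    push_cast
    simp only [mul_sum]
  have hc : c ^ 2 = -(((g / (2 * hb * κ)) ^ 2 : ℝ) : ℂ) := by
    simp [c, mul_pow]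
  rw [hlaplacian, hc, smul_smul, ← neg_smul, ← add_smul]
  convert zero_smul ℂ (U A) using 2
  have hhb0 : (hb : ℂ) ≠ 0 := by exact_mod_cast hhb.ne'
  have hκ0 : (κ : ℂ) ≠ 0 := by exact_mod_cast hκ.ne'
  push_cast
  field_simp
  ring

/-- if U solves the first-order system
∂U/∂Aᵢ = (ig/(2ħκ))·𝒜ᵢ·U with 𝒜ᵢ := Σⱼ (BⱼCᵢ − CⱼBᵢ)γⱼ, then U is twice
differentiable and −(ħ²κ/2)·Σᵢ ∂²U/∂Aᵢ² + (g²/4κ)·(‖B‖²‖C‖² − ⟨B,C⟩²)·U = 0. -/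
theorem phase_factor_second_order_equation
    (D N : ℕ) (hD : 1 ≤ D) (hN : 1 ≤ N)
    (γ : Fin D → Matrix (Fin N) (Fin N) ℂ)
    (hγ : ∀ i j, γ i * γ j + γ j * γ i =
      if i = j then (-2 : ℂ) • (1 : Matrix (Fin N) (Fin N) ℂ) else 0)
    (hb κ g : ℝ) (hhb : 0 < hb) (hκ : 0 < κ) (hg : 0 < g)
    (B C : EuclideanSpace ℝ (Fin D))
    (𝒜 : Fin D → Matrix (Fin N) (Fin N) ℂ)
    (h𝒜 : ∀ i, 𝒜 i = ∑ j, ((B j * C i - C j * B i : ℝ) : ℂ) • γ j)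
    (U : (Fin D → ℝ) → Matrix (Fin N) (Fin N) ℂ)
    (hU : Differentiable ℝ U)
    (hU1 : ∀ (A : Fin D → ℝ) (i : Fin D),
      fderiv ℝ U A (Pi.single i 1) =
        (Complex.I * ((g / (2 * hb * κ) : ℝ) : ℂ)) • (𝒜 i * U A)) :
    (∀ i, Differentiable ℝ (pd i U)) ∧
    ∀ A : Fin D → ℝ,
      -(((hb ^ 2 * κ / 2 : ℝ) : ℂ) • ∑ i, pd i (pd i U) A)
        + ((g ^ 2 / (4 * κ) * (‖B‖ ^ 2 * ‖C‖ ^ 2 - (inner ℝ B C : ℝ) ^ 2) : ℝ) : ℂ) • U A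
      = 0 :=
  phase_factor_second_order_equation_general D N γ hγ hb κ g hhb hκ B C 𝒜 h𝒜 U hU hU1
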